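/- For n ≥ 7, the Euler characteristic of NI[P_n^2] equals 1 (so its reduced Euler characteristic is 0), and the multiplicity of S/NI(P_n^2) equals n - 6. -/

import Mathlib

noncomputable section

/-- The face `{x_{a+1}, …, x_{b+1}}` (0-indexed: `{j : Fin n | a ≤ j ≤ b}`). -/
def faceIcc (n a b : ℕ) : Finset (Fin n) :=
  Finset.univ.filter (fun j : Fin n => a ≤ (j : ℕ) ∧ (j : ℕ) ≤ b)

/-- The facets of the simplicial complex `NI[P_n²]` (for `n ≥ 7`), 1-indexed in the paper:
`F_1 = {x_1,x_2,x_3}`, `F_{n-4} = {x_{n-2},x_{n-1},x_n}`, and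
`F_i = {x_i,…,x_{i+4}}` for `2 ≤ i ≤ n-5`. -/
def niFacets (n : ℕ) : Finset (Finset (Fin n)) :=
  insert (faceIcc n 0 2) (insert (faceIcc n (n - 3) (n - 1))
    ((Finset.Icc 1 (n - 6)).image fun a => faceIcc n a (a + 4)))

/-- The simplicial complex `NI[P_n²]`: all subsets of the facets. -/
def niComplex (n : ℕ) : Finset (Finset (Fin n)) :=
  Finset.univ.filter (fun A : Finset (Fin n) => ∃ F ∈ niFacets n, A ⊆ F)

/-- `fVec n i` is the number of faces of `NI[P_n²]` with exactly `i` elements,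
i.e. the entry `f_{i-1}` of the `f`-vector. -/
def fVec (n i : ℕ) : ℕ :=
  ((niComplex n).filter (fun A => A.card = i)).card

/-- The `h`-vector, defined from the `f`-vector by
`h_i = ∑_{j=0}^{i} (-1)^{i-j} C(d-j, i-j) f_{j-1}` with `d = 5`. -/
def hVec (n i : ℕ) : ℤ :=
  ∑ j ∈ Finset.range (i + 1),
    (-1 : ℤ) ^ (i - j) * (Nat.choose (5 - j) (i - j)) * fVec n j

/-- The Euler characteristic `χ = f_0 - f_1 + f_2 - f_3 + f_4` of `NI[P_n²]`. -/
def eulerChar (n : ℕ) : ℤ :=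
  (fVec n 1 : ℤ) - fVec n 2 + fVec n 3 - fVec n 4 + fVec n 5

lemma mem_faceIcc {n a b : ℕ} {j : Fin n} :
    j ∈ faceIcc n a b ↔ a ≤ (j : ℕ) ∧ (j : ℕ) ≤ b := by
  simp [faceIcc]

lemma faceIcc_mono {n a b a' b' : ℕ} (h1 : a' ≤ a) (h2 : b ≤ b') :
    faceIcc n a b ⊆ faceIcc n a' b' := by
  intro j hj
  rw [mem_faceIcc] at *
  omega

lemma faceIcc_image_val {n a b : ℕ} (hb : b < n) :
    (faceIcc n a b).image Fin.val = Finset.Icc a b := by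
  ext k
  simp only [faceIcc, Finset.mem_image, Finset.mem_filter, Finset.mem_univ, true_and,
    Finset.mem_Icc]
  constructor
  · rintro ⟨j, ⟨h1, h2⟩, rfl⟩; exact ⟨h1, h2⟩
  · rintro ⟨h1, h2⟩; exact ⟨⟨k, lt_of_le_of_lt h2 hb⟩, ⟨h1, h2⟩, rfl⟩

lemma card_faceIcc {n a b : ℕ} (hb : b < n) : (faceIcc n a b).card = b + 1 - a := by
  rw [← Nat.card_Icc, ← faceIcc_image_val hb,
    Finset.card_image_of_injective _ Fin.val_injective]

lemma card_faceIcc_le (n a b : ℕ) : (faceIcc n a b).card ≤ b + 1 - a := by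
  calc (faceIcc n a b).card = ((faceIcc n a b).image Fin.val).card :=
        (Finset.card_image_of_injective _ Fin.val_injective).symm
    _ ≤ (Finset.Icc a b).card := Finset.card_le_card (by
        intro k hk
        simp only [Finset.mem_image, faceIcc, Finset.mem_filter, Finset.mem_univ,
          true_and] at hk
        obtain ⟨j, ⟨h1, h2⟩, rfl⟩ := hk
        simp only [Finset.mem_Icc]
        exact ⟨h1, h2⟩)
    _ = b + 1 - a := Nat.card_Icc a b

lemma faceIcc_nonempty {n a b : ℕ} (hab : a ≤ b) (hb : b < n) : (faceIcc n a b).Nonempty :=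
  ⟨⟨a, lt_of_le_of_lt hab hb⟩, mem_faceIcc.2 ⟨le_rfl, hab⟩⟩

lemma niComplex_eq (n : ℕ) :
    niComplex n = (faceIcc n 0 2).powerset ∪ ((faceIcc n (n - 3) (n - 1)).powerset ∪
      (Finset.Icc 1 (n - 6)).biUnion (fun a => (faceIcc n a (a + 4)).powerset)) := by
  ext A
  simp only [niComplex, niFacets, Finset.mem_filter, Finset.mem_univ, true_and,
    Finset.mem_insert, Finset.mem_image, Finset.mem_union, Finset.mem_biUnion,
    Finset.mem_powerset]
  constructor
  · rintro ⟨F, (rfl | rfl | ⟨a, ha, rfl⟩), hsub⟩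
    · exact Or.inl hsub
    · exact Or.inr (Or.inl hsub)
    · exact Or.inr (Or.inr ⟨a, ha, hsub⟩)
  · rintro (h | h | ⟨a, ha, h⟩)
    · exact ⟨_, Or.inl rfl, h⟩
    · exact ⟨_, Or.inr (Or.inl rfl), h⟩
    · exact ⟨_, Or.inr (Or.inr ⟨a, ha, rfl⟩), h⟩

lemma e_biUnion (n : ℕ) (hn : 7 ≤ n) : ∀ m, 1 ≤ m → m ≤ n - 6 →
    ∑ A ∈ (Finset.Icc 1 m).biUnion (fun a => (faceIcc n a (a + 4)).powerset),
      (-1 : ℤ) ^ A.card = 0 := by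
  intro m
  induction m with
  | zero => omega
  | succ k ih =>
    intro _ hk
    rcases Nat.eq_zero_or_pos k with rfl | hkpos
    · rw [Finset.Icc_self, Finset.singleton_biUnion]
      exact Finset.sum_powerset_neg_one_pow_card_of_nonempty
        (faceIcc_nonempty (by omega) (by omega))
    · have hins : Finset.Icc 1 (k + 1) = insert (k + 1) (Finset.Icc 1 k) := by
        ext x; simp only [Finset.mem_Icc, Finset.mem_insert]; omega
      rw [hins, Finset.biUnion_insert]
      have e1 := Finset.sum_union_inter (s₁ := (faceIcc n (k + 1) (k + 1 + 4)).powerset)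
        (s₂ := (Finset.Icc 1 k).biUnion (fun a => (faceIcc n a (a + 4)).powerset))
        (f := fun A => (-1 : ℤ) ^ A.card)
      have hST : (faceIcc n (k + 1) (k + 1 + 4)).powerset ∩
          (Finset.Icc 1 k).biUnion (fun a => (faceIcc n a (a + 4)).powerset)
          = (faceIcc n (k + 1) (k + 4)).powerset := by
        ext A
        simp only [Finset.mem_inter, Finset.mem_powerset, Finset.mem_biUnion, Finset.mem_Icc]
        constructor
        · rintro ⟨h1, a, ⟨ha1, ha2⟩, h2⟩
          intro j hj
          have m1 := mem_faceIcc.1 (h1 hj)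
          have m2 := mem_faceIcc.1 (h2 hj)
          rw [mem_faceIcc]; omega
        · intro h
          exact ⟨h.trans (faceIcc_mono le_rfl (by omega)),
            k, ⟨hkpos, le_rfl⟩, h.trans (faceIcc_mono (by omega) le_rfl)⟩
      rw [hST] at e1
      have hS : ∑ A ∈ (faceIcc n (k + 1) (k + 1 + 4)).powerset, (-1 : ℤ) ^ A.card = 0 :=
        Finset.sum_powerset_neg_one_pow_card_of_nonempty
          (faceIcc_nonempty (by omega) (by omega))
      have hT : ∑ A ∈ (Finset.Icc 1 k).biUnion
          (fun a => (faceIcc n a (a + 4)).powerset), (-1 : ℤ) ^ A.card = 0 :=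
        ih hkpos (by omega)
      have hI : ∑ A ∈ (faceIcc n (k + 1) (k + 4)).powerset, (-1 : ℤ) ^ A.card = 0 :=
        Finset.sum_powerset_neg_one_pow_card_of_nonempty
          (faceIcc_nonempty (by omega) (by omega))
      linarith

lemma e_niComplex (n : ℕ) (hn : 7 ≤ n) :
    ∑ A ∈ niComplex n, (-1 : ℤ) ^ A.card = 0 := by
  rw [niComplex_eq]
  have hU : ∑ A ∈ (Finset.Icc 1 (n - 6)).biUnion
      (fun a => (faceIcc n a (a + 4)).powerset), (-1 : ℤ) ^ A.card = 0 :=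
    e_biUnion n hn (n - 6) (by omega) le_rfl
  have hP2 : ∑ A ∈ (faceIcc n (n - 3) (n - 1)).powerset, (-1 : ℤ) ^ A.card = 0 :=
    Finset.sum_powerset_neg_one_pow_card_of_nonempty
      (faceIcc_nonempty (by omega) (by omega))
  have hint2 : (faceIcc n (n - 3) (n - 1)).powerset ∩
      (Finset.Icc 1 (n - 6)).biUnion (fun a => (faceIcc n a (a + 4)).powerset)
      = (faceIcc n (n - 3) (n - 2)).powerset := by
    ext A
    simp only [Finset.mem_inter, Finset.mem_powerset, Finset.mem_biUnion, Finset.mem_Icc]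
    constructor
    · rintro ⟨h1, a, ⟨ha1, ha2⟩, h2⟩
      intro j hj
      have m1 := mem_faceIcc.1 (h1 hj)
      have m2 := mem_faceIcc.1 (h2 hj)
      rw [mem_faceIcc]; omega
    · intro h
      exact ⟨h.trans (faceIcc_mono le_rfl (by omega)),
        n - 6, ⟨by omega, le_rfl⟩, h.trans (faceIcc_mono (by omega) (by omega))⟩
  have e2 := Finset.sum_union_inter (s₁ := (faceIcc n (n - 3) (n - 1)).powerset)
    (s₂ := (Finset.Icc 1 (n - 6)).biUnion (fun a => (faceIcc n a (a + 4)).powerset))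
    (f := fun A => (-1 : ℤ) ^ A.card)
  rw [hint2] at e2
  have hI2 : ∑ A ∈ (faceIcc n (n - 3) (n - 2)).powerset, (-1 : ℤ) ^ A.card = 0 :=
    Finset.sum_powerset_neg_one_pow_card_of_nonempty
      (faceIcc_nonempty (by omega) (by omega))
  have hP1 : ∑ A ∈ (faceIcc n 0 2).powerset, (-1 : ℤ) ^ A.card = 0 :=
    Finset.sum_powerset_neg_one_pow_card_of_nonempty
      (faceIcc_nonempty (by omega) (by omega))
  have hint1 : (faceIcc n 0 2).powerset ∩ ((faceIcc n (n - 3) (n - 1)).powerset ∪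
      (Finset.Icc 1 (n - 6)).biUnion (fun a => (faceIcc n a (a + 4)).powerset))
      = (faceIcc n 1 2).powerset := by
    ext A
    simp only [Finset.mem_inter, Finset.mem_powerset, Finset.mem_union, Finset.mem_biUnion,
      Finset.mem_Icc]
    constructor
    · rintro ⟨h1, (h2 | ⟨a, ⟨ha1, ha2⟩, h2⟩)⟩ <;> intro j hj
      · have m1 := mem_faceIcc.1 (h1 hj)
        have m2 := mem_faceIcc.1 (h2 hj)
        rw [mem_faceIcc]; omega
      · have m1 := mem_faceIcc.1 (h1 hj)
        have m2 := mem_faceIcc.1 (h2 hj)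
        rw [mem_faceIcc]; omega
    · intro h
      exact ⟨h.trans (faceIcc_mono (by omega) le_rfl),
        Or.inr ⟨1, ⟨le_rfl, by omega⟩, h.trans (faceIcc_mono (by omega) (by omega))⟩⟩
  have e1 := Finset.sum_union_inter (s₁ := (faceIcc n 0 2).powerset)
    (s₂ := (faceIcc n (n - 3) (n - 1)).powerset ∪
      (Finset.Icc 1 (n - 6)).biUnion (fun a => (faceIcc n a (a + 4)).powerset))
    (f := fun A => (-1 : ℤ) ^ A.card)
  rw [hint1] at e1
  have hI1 : ∑ A ∈ (faceIcc n 1 2).powerset, (-1 : ℤ) ^ A.card = 0 :=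
    Finset.sum_powerset_neg_one_pow_card_of_nonempty
      (faceIcc_nonempty (by omega) (by omega))
  linarith

lemma card_le_five (n : ℕ) (hn : 7 ≤ n) {A : Finset (Fin n)} (hA : A ∈ niComplex n) :
    A.card ≤ 5 := by
  simp only [niComplex, niFacets, Finset.mem_filter, Finset.mem_univ, true_and,
    Finset.mem_insert, Finset.mem_image] at hA
  obtain ⟨F, hF, hsub⟩ := hA
  have hcard := Finset.card_le_card hsub
  rcases hF with rfl | rfl | ⟨a, ha, rfl⟩
  · have := card_faceIcc_le n 0 2; omega
  · have := card_faceIcc_le n (n - 3) (n - 1); omega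
  · have := card_faceIcc_le n a (a + 4); omega

lemma sum_pow_card (n : ℕ) (hn : 7 ≤ n) :
    ∑ A ∈ niComplex n, (-1 : ℤ) ^ A.card
      = ∑ i ∈ Finset.range 6, (-1 : ℤ) ^ i * fVec n i := by
  rw [← Finset.sum_fiberwise_of_maps_to (g := Finset.card) (t := Finset.range 6)
    (fun A hA => Finset.mem_range.2 (by have := card_le_five n hn hA; omega))]
  refine Finset.sum_congr rfl fun i _ => ?_
  calc ∑ A ∈ (niComplex n).filter (fun A => A.card = i), (-1 : ℤ) ^ A.card
      = ∑ A ∈ (niComplex n).filter (fun A => A.card = i), (-1 : ℤ) ^ i :=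
        Finset.sum_congr rfl fun A hA => by rw [(Finset.mem_filter.1 hA).2]
    _ = (-1 : ℤ) ^ i * fVec n i := by
        rw [Finset.sum_const, nsmul_eq_mul, fVec]; ring

lemma fVec_zero (n : ℕ) : fVec n 0 = 1 := by
  have h : (niComplex n).filter (fun A => A.card = 0) = {∅} := by
    ext A
    simp only [Finset.mem_filter, Finset.card_eq_zero, Finset.mem_singleton]
    constructor
    · rintro ⟨-, rfl⟩; rfl
    · rintro rfl
      refine ⟨?_, rfl⟩
      simp only [niComplex, niFacets, Finset.mem_filter, Finset.mem_univ, true_and]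
      exact Finset.mem_filter.2 ⟨Finset.mem_univ _, faceIcc n 0 2, Finset.mem_insert_self _ _,
        Finset.empty_subset _⟩
  rw [fVec, h, Finset.card_singleton]

lemma fVec_five (n : ℕ) (hn : 7 ≤ n) : fVec n 5 = n - 6 := by
  have himg : (niComplex n).filter (fun A => A.card = 5)
      = (Finset.Icc 1 (n - 6)).image (fun a => faceIcc n a (a + 4)) := by
    ext A
    simp only [Finset.mem_filter, Finset.mem_image, Finset.mem_Icc]
    constructor
    · rintro ⟨hA, hcard⟩
      simp only [niComplex, niFacets, Finset.mem_filter, Finset.mem_univ, true_and,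
        Finset.mem_insert, Finset.mem_image, Finset.mem_Icc] at hA
      obtain ⟨F, hF, hsub⟩ := (Finset.mem_filter.1 hA).2
      simp only [Finset.mem_insert, Finset.mem_image, Finset.mem_Icc] at hF
      have hle := Finset.card_le_card hsub
      rcases hF with rfl | rfl | ⟨a, ha, rfl⟩
      · have := card_faceIcc_le n 0 2; omega
      · have := card_faceIcc_le n (n - 3) (n - 1); omega
      · have hc : (faceIcc n a (a + 4)).card = 5 := by
          rw [card_faceIcc (by omega)]; omega
        exact ⟨a, ha, (Finset.eq_of_subset_of_card_le hsub (by omega)).symm⟩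
    · rintro ⟨a, ⟨ha1, ha2⟩, rfl⟩
      constructor
      · simp only [niComplex, niFacets, Finset.mem_filter, Finset.mem_univ, true_and,
          Finset.mem_insert, Finset.mem_image, Finset.mem_Icc]
        exact Finset.mem_filter.2 ⟨Finset.mem_univ _, faceIcc n a (a + 4),
          Finset.mem_insert_of_mem (Finset.mem_insert_of_mem
            (Finset.mem_image.2 ⟨a, Finset.mem_Icc.2 ⟨ha1, ha2⟩, rfl⟩)), subset_rfl⟩
      · rw [card_faceIcc (by omega)]; omega
  have hinj : Set.InjOn (fun a => faceIcc n a (a + 4)) ↑(Finset.Icc 1 (n - 6)) := by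
    intro a ha b hb hab
    simp only [Finset.coe_Icc, Set.mem_Icc] at ha hb
    have h1 : (⟨a, by omega⟩ : Fin n) ∈ faceIcc n a (a + 4) :=
      mem_faceIcc.2 ⟨le_rfl, Nat.le_add_right a 4⟩
    have h2 : (⟨b, by omega⟩ : Fin n) ∈ faceIcc n b (b + 4) :=
      mem_faceIcc.2 ⟨le_rfl, Nat.le_add_right b 4⟩
    have hab' : faceIcc n a (a + 4) = faceIcc n b (b + 4) := hab
    rw [hab'] at h1
    rw [← hab'] at h2
    have m1 : b ≤ a ∧ a ≤ b + 4 := by simpa using mem_faceIcc.1 h1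
    have m2 : a ≤ b ∧ b ≤ a + 4 := by simpa using mem_faceIcc.1 h2
    omega
  rw [fVec, himg, Finset.card_image_of_injOn hinj, Nat.card_Icc]
  omega

lemma hsum (n : ℕ) : ∑ i ∈ Finset.range 6, hVec n i = fVec n 5 := by
  simp only [hVec, Finset.sum_range_succ, Finset.sum_range_zero]
  norm_num [Nat.choose]
  ring

/-- For `n ≥ 7`, the Euler characteristic of `NI[P_n²]` equals `1`, hence the reduced
Euler characteristic equals `0`; and the multiplicity of `S/NI(P_n²)`, the sum of the
entries of the `h`-vector, equals `n - 6`. -/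
theorem eulerChar_multiplicity_niComplex (n : ℕ) (hn : 7 ≤ n) :
    eulerChar n = 1 ∧ eulerChar n - 1 = 0 ∧
      ∑ i ∈ Finset.range 6, hVec n i = (n : ℤ) - 6 := by
  have he := e_niComplex n hn
  rw [sum_pow_card n hn] at he
  simp only [Finset.sum_range_succ, Finset.sum_range_zero] at he
  have h0 := fVec_zero n
  have h5 := fVec_five n hn
  have h5' : (fVec n 5 : ℤ) = (n : ℤ) - 6 := by rw [h5]; omega
  have h0' : (fVec n 0 : ℤ) = 1 := by rw [h0]; norm_num
  have hchi : eulerChar n = 1 := by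
    rw [eulerChar]
    rw [h0'] at he
    norm_num at he
    linarith
  exact ⟨hchi, by rw [hchi]; ring, by rw [hsum, h5']⟩

end
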